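/- arXiv:2007.01354 — 6 statements merged into one kernel-verified Lean document; each statement's English description precedes it below -/
import Mathlib

section
/- For all integers m ≥ 10 and 2 ≤ k ≤ (m-1)/2, one has C(m-4,k) + 2·C(m-4,k-2) > C(m,k)^{1/2}. -/
/-!
Put `a = C(m-4,k)` and `b = C(m-4,k-2)`. Since `(a + 2b)² ≥ 8ab`, it suffices to show
`C(m,k) < 8ab`. Counting `k`-subsets of an `m`-set with two marked points inside and two
outside in two ways gives `C(m,k) C(k,2) C(m-k,2) = C(m,2) C(m-2,2) b`, and `a ≥ C(m-4,2)`.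
So the claim reduces to `C(m,2) C(m-2,2) < 8 C(m-4,2) C(k,2) C(m-k,2)`, a polynomial
inequality that holds because `k ≥ 2`, `m - k > m/2` and `m ≥ 10`.
-/

namespace Nat

theorem choose_le_choose_of_le_half {n a b : ℕ} (hab : a ≤ b) (hb : b ≤ n / 2) :
    n.choose a ≤ n.choose b := by
  induction b, hab using Nat.le_induction with
  | base => exact le_rfl
  | succ b _ ih => exact (ih (by omega)).trans (choose_le_succ_of_lt_half_left (by omega))

theorem choose_two_le_choose {n k : ℕ} (hk : 2 ≤ k) (hkn : k + 2 ≤ n) :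
    n.choose 2 ≤ n.choose k := by
  rcases le_or_gt k (n / 2) with h | h
  · exact choose_le_choose_of_le_half hk h
  · rw [← choose_symm (by omega : k ≤ n)]
    exact choose_le_choose_of_le_half (by omega) (by omega)

theorem choose_mul_choose_two_mul_choose_two {m k : ℕ} (hk : 2 ≤ k) (hkm : k + 2 ≤ m) :
    m.choose k * (k.choose 2 * (m - k).choose 2) =
      m.choose 2 * (m - 2).choose 2 * (m - 4).choose (k - 2) := by
  calc m.choose k * (k.choose 2 * (m - k).choose 2)
      = m.choose 2 * ((m - 2).choose (k - 2) * (m - k).choose 2) := by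
        rw [← mul_assoc, choose_mul hk, mul_assoc]
    _ = m.choose 2 * ((m - 2).choose (m - k) * (m - k).choose 2) := by
        rw [choose_symm_of_eq_add (by omega : m - 2 = (k - 2) + (m - k))]
    _ = m.choose 2 * ((m - 2).choose 2 * (m - 4).choose (m - k - 2)) := by
        rw [choose_mul (by omega : 2 ≤ m - k), show m - 2 - 2 = m - 4 by omega]
    _ = m.choose 2 * (m - 2).choose 2 * (m - 4).choose (k - 2) := by
        rw [choose_symm_of_eq_add (by omega : m - 4 = (m - k - 2) + (k - 2)), mul_assoc]

theorem choose_two_mul_choose_two_lt {m k : ℕ} (hm : 10 ≤ m) (hk : 2 ≤ k) (hkm : 2 * k < m) :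
    m.choose 2 * (m - 2).choose 2 < 8 * (m - 4).choose 2 * (k.choose 2 * (m - k).choose 2) := by
  rw [← Nat.cast_lt (α := ℝ)]
  push_cast [cast_choose_two, cast_sub (by omega : 2 ≤ m), cast_sub (by omega : 4 ≤ m),
    cast_sub (by omega : k ≤ m)]
  have hm' : (10 : ℝ) ≤ m := by exact_mod_cast hm
  have hk' : (2 : ℝ) ≤ k := by exact_mod_cast hk
  have hkm' : 2 * (k : ℝ) + 1 ≤ m := by exact_mod_cast hkm
  have hinside : (2 : ℝ) ≤ k * (k - 1) := by nlinarith
  have houtside : ((m : ℝ) + 1) * (m - 1) ≤ 4 * ((m - k) * (m - k - 1)) := by nlinarith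
  have hpairs : ((m : ℝ) + 1) * (m - 1) ≤ 2 * (k * (k - 1) * ((m - k) * (m - k - 1))) := by
    nlinarith [mul_le_mul hinside houtside (by nlinarith) (by linarith)]
  have hcubic : (m : ℝ) * (m - 2) * (m - 3) < 2 * ((m - 4) * (m - 5) * (m + 1)) := by
    nlinarith [mul_nonneg (mul_nonneg (sub_nonneg.2 hm') (sub_nonneg.2 hm')) (sub_nonneg.2 hm')]
  have hpos : (0 : ℝ) < (m - 4) * (m - 5) := by nlinarith
  nlinarith [mul_le_mul_of_nonneg_left hpairs hpos.le,
    mul_lt_mul_of_pos_right hcubic (by linarith : (0 : ℝ) < m - 1)]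

theorem choose_lt_eight_mul_choose_mul_choose {m k : ℕ} (hm : 10 ≤ m) (hk : 2 ≤ k)
    (hkm : 2 * k < m) :
    m.choose k < 8 * (m - 4).choose k * (m - 4).choose (k - 2) := by
  refine Nat.lt_of_mul_lt_mul_right (a := k.choose 2 * (m - k).choose 2) ?_
  calc m.choose k * (k.choose 2 * (m - k).choose 2)
      = m.choose 2 * (m - 2).choose 2 * (m - 4).choose (k - 2) :=
        choose_mul_choose_two_mul_choose_two hk (by omega)
    _ < 8 * (m - 4).choose 2 * (k.choose 2 * (m - k).choose 2) * (m - 4).choose (k - 2) :=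
        Nat.mul_lt_mul_of_pos_right (choose_two_mul_choose_two_lt hm hk hkm)
          (choose_pos (by omega))
    _ ≤ 8 * (m - 4).choose k * (k.choose 2 * (m - k).choose 2) * (m - 4).choose (k - 2) := by
        gcongr
        exact choose_two_le_choose hk (by omega)
    _ = 8 * (m - 4).choose k * (m - 4).choose (k - 2) * (k.choose 2 * (m - k).choose 2) := by
        ring

end Nat

/-- For all integers `m ≥ 10` and `2 ≤ k ≤ (m-1)/2`,
`C(m-4,k) + 2·C(m-4,k-2) > C(m,k)^{1/2}`. -/
theorem stmt_1 (m k : ℕ) (hm : 10 ≤ m) (hk : 2 ≤ k) (hkm : 2 * k ≤ m - 1) :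
    ((m - 4).choose k + 2 * (m - 4).choose (k - 2) : ℝ) >
      ((m.choose k : ℝ)) ^ ((1 : ℝ) / 2) := by
  have hb : (0 : ℝ) < (m - 4).choose (k - 2) := Nat.cast_pos.2 (Nat.choose_pos (by omega))
  have hkey : (m.choose k : ℝ) < 8 * (m - 4).choose k * (m - 4).choose (k - 2) := by
    exact_mod_cast Nat.choose_lt_eight_mul_choose_mul_choose hm hk (by omega)
  rw [← Real.sqrt_eq_rpow, gt_iff_lt, Real.sqrt_lt' (by positivity)]
  nlinarith [sq_nonneg (((m - 4).choose k : ℝ) - 2 * (m - 4).choose (k - 2))]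
end

section
/- For every integer m > 20 and every involution t in the alternating group A_m, the conjugacy class of t in A_m has size less than |A_m|^{11/20}. -/
/-!
An involution of `A_m` is a product of `k ≥ 1` disjoint transpositions, and its class in `A_m`
lies inside its class in `S_m`, which has `m! / (k! 2^k n!)` elements, `n = m - 2k`. Since
`|A_m| = m!/2`, it suffices that `(m!)^9 2^11 < (k! 2^k n!)^20` whenever `2k + n = m ≥ 21` and
`k ≥ 1`. This is checked directly for `m = 21, 22`. For `m ≥ 23` it is inherited from
`(k, n - 1)` when `4n > m`, because then `m^9 ≤ n^20`, and from `(k - 1, n)` otherwise, because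
then `(m (m - 1))^9 ≤ (2k)^20`.
-/

open Nat Equiv Equiv.Perm

lemma Subgroup.natCard_isConj_le {G : Type*} [Group G] [Finite G] {H : Subgroup G} (t : H) :
    Nat.card {x : H // IsConj t x} ≤ Nat.card {g : G | IsConj (t : G) g} :=
  Nat.card_le_card_of_injective (fun x => ⟨x.1, H.subtype.map_isConj x.2⟩)
    fun _ _ h => Subtype.val_injective (Subtype.val_injective (congrArg Subtype.val h :))

lemma Equiv.Perm.card_isConj_mul_eq_of_cycleType_eq_replicate {α : Type*} [Fintype α]
    [DecidableEq α] {σ : Perm α} {k : ℕ} (h : σ.cycleType = Multiset.replicate k 2) :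
    Nat.card {τ : Perm α | IsConj σ τ} * (k ! * 2 ^ k * (Fintype.card α - 2 * k)!) =
      (Fintype.card α)! := by
  rw [← card_isConj_mul_eq σ, h]
  rcases k.eq_zero_or_pos with rfl | hk
  · simp
  · simp [Multiset.toFinset_replicate, hk.ne', mul_comm, mul_assoc]

lemma Equiv.Perm.exists_cycleType_eq_replicate_of_orderOf_eq_two {α : Type*} [Fintype α]
    [DecidableEq α] {σ : Perm α} (h : orderOf σ = 2) :
    ∃ k, σ.cycleType = Multiset.replicate (k + 1) 2 :=
  h ▸ cycleType_prime_order (h ▸ Nat.prime_two)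

lemma Equiv.Perm.two_mul_le_card_of_cycleType_eq_replicate {α : Type*} [Fintype α]
    [DecidableEq α] {σ : Perm α} {k : ℕ} (h : σ.cycleType = Multiset.replicate k 2) :
    2 * k ≤ Fintype.card α := by
  have := σ.sum_cycleType
  rw [h, Multiset.sum_replicate, smul_eq_mul, mul_comm] at this
  exact this ▸ σ.support.card_le_univ

lemma lt_rpow_div_of_pow_lt {a b : ℝ} (ha : 0 ≤ a) (hb : 0 ≤ b) {p q : ℕ} (hq : q ≠ 0)
    (h : a ^ q < b ^ p) : a < b ^ ((p : ℝ) / q) := by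
  rw [div_eq_mul_inv, Real.rpow_mul hb, Real.rpow_natCast,
    Real.lt_rpow_inv_iff_of_pos ha (by positivity) (by positivity), Real.rpow_natCast]
  exact h

lemma mul_pow_nine_mul_lt {a b x y : ℕ} (hab : a ^ 9 * 2 ^ 11 < b ^ 20) (hxy : x ^ 9 ≤ y ^ 20)
    (hy : 0 < y) : (x * a) ^ 9 * 2 ^ 11 < (y * b) ^ 20 := by
  rw [mul_pow, mul_pow, mul_assoc]
  exact mul_lt_mul_of_le_of_lt_of_nonneg_of_pos hxy hab (Nat.zero_le _) (by positivity)

lemma pow_nine_le_pow_twenty_of_lt_four_mul {m n : ℕ} (hm : 23 ≤ m) (h : m < 4 * n) :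
    m ^ 9 ≤ n ^ 20 := by
  have h4 : 4 ^ 20 ≤ m ^ 11 := le_trans (by norm_num) (Nat.pow_le_pow_left hm 11)
  have : 4 ^ 20 * m ^ 9 < 4 ^ 20 * n ^ 20 := calc
    4 ^ 20 * m ^ 9 ≤ m ^ 11 * m ^ 9 := Nat.mul_le_mul_right _ h4
    _ = m ^ 20 := by ring
    _ < (4 * n) ^ 20 := Nat.pow_lt_pow_left h (by norm_num)
    _ = 4 ^ 20 * n ^ 20 := mul_pow _ _ _
  exact (Nat.lt_of_mul_lt_mul_left this).le

lemma sq_pow_nine_le_pow_twenty_of_three_mul_le {m c : ℕ} (hm : 23 ≤ m) (h : 3 * m ≤ 4 * c) :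
    (m ^ 2) ^ 9 ≤ c ^ 20 := by
  have h3 : 4 ^ 20 ≤ 3 ^ 20 * m ^ 2 :=
    le_trans (by norm_num) (Nat.mul_le_mul_left _ (Nat.pow_le_pow_left hm 2))
  have : 4 ^ 20 * (m ^ 2) ^ 9 ≤ 4 ^ 20 * c ^ 20 := calc
    4 ^ 20 * (m ^ 2) ^ 9 ≤ 3 ^ 20 * m ^ 2 * (m ^ 2) ^ 9 := Nat.mul_le_mul_right _ h3
    _ = (3 * m) ^ 20 := by ring
    _ ≤ (4 * c) ^ 20 := Nat.pow_le_pow_left h 20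
    _ = 4 ^ 20 * c ^ 20 := mul_pow _ _ _
  exact Nat.le_of_mul_le_mul_left this (by positivity)

lemma factorial_pow_nine_mul_lt_of_mem_Icc :
    ∀ m ∈ Finset.Icc 21 22, ∀ k ∈ Finset.Icc 1 (m / 2),
    (m !) ^ 9 * 2 ^ 11 < (k ! * 2 ^ k * (m - 2 * k)!) ^ 20 := by
  decide

theorem factorial_pow_nine_mul_lt {k n : ℕ} (hk : 1 ≤ k) (hm : 21 ≤ 2 * k + n) :
    (2 * k + n)! ^ 9 * 2 ^ 11 < (k ! * 2 ^ k * n !) ^ 20 := by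
  induction hsum : 2 * k + n using Nat.strong_induction_on generalizing k n with
  | _ m ih =>
    subst hsum
    rcases lt_or_ge (2 * k + n) 23 with hsmall | hlarge
    · have := factorial_pow_nine_mul_lt_of_mem_Icc (2 * k + n)
        (Finset.mem_Icc.2 ⟨hm, by omega⟩) k (Finset.mem_Icc.2 ⟨hk, by omega⟩)
      rwa [show 2 * k + n - 2 * k = n by omega] at this
    rcases lt_or_ge (2 * k + n) (4 * n) with hn | hn
    · obtain ⟨n, rfl⟩ : ∃ n', n = n' + 1 := ⟨n - 1, by omega⟩
      have hF : (2 * k + (n + 1))! = (2 * k + (n + 1)) * (2 * k + n)! := factorial_succ _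
      have hD : k ! * 2 ^ k * (n + 1)! = (n + 1) * (k ! * 2 ^ k * n !) := by
        rw [factorial_succ]; ring
      rw [hF, hD]
      exact mul_pow_nine_mul_lt (ih _ (by omega) (k := k) (n := n) hk (by omega) rfl)
        (pow_nine_le_pow_twenty_of_lt_four_mul hlarge hn) n.succ_pos
    · obtain ⟨k, rfl⟩ : ∃ k', k = k' + 1 := ⟨k - 1, by omega⟩
      have hF : (2 * (k + 1) + n)! = ((2 * k + n + 1) * (2 * k + n + 2)) * (2 * k + n)! := by
        rw [show 2 * (k + 1) + n = 2 * k + n + 1 + 1 by ring, factorial_succ, factorial_succ]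
        ring
      have hD : (k + 1)! * 2 ^ (k + 1) * n ! = 2 * (k + 1) * (k ! * 2 ^ k * n !) := by
        rw [factorial_succ, pow_succ]; ring
      have hx : ((2 * k + n + 1) * (2 * k + n + 2)) ^ 9 ≤ (2 * (k + 1)) ^ 20 :=
        le_trans (Nat.pow_le_pow_left (by nlinarith) 9)
          (sq_pow_nine_le_pow_twenty_of_three_mul_le hlarge (by omega))
      rw [hF, hD]
      exact mul_pow_nine_mul_lt (ih _ (by omega) (k := k) (n := n) (by omega) (by omega) rfl)
        hx (by omega)

lemma pow_twenty_lt_pow_eleven_of_mul_le {N D c : ℕ} (hND : N * D ≤ 2 * c)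
    (hD : (2 * c) ^ 9 * 2 ^ 11 < D ^ 20) (hN : 0 < N) : N ^ 20 < c ^ 11 := by
  have : 2 ^ 20 * c ^ 9 * N ^ 20 < 2 ^ 20 * c ^ 9 * c ^ 11 := calc
    2 ^ 20 * c ^ 9 * N ^ 20 = N ^ 20 * ((2 * c) ^ 9 * 2 ^ 11) := by ring
    _ < N ^ 20 * D ^ 20 := Nat.mul_lt_mul_of_pos_left hD (by positivity)
    _ = (N * D) ^ 20 := (mul_pow _ _ _).symm
    _ ≤ (2 * c) ^ 20 := Nat.pow_le_pow_left hND 20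
    _ = 2 ^ 20 * c ^ 9 * c ^ 11 := by ring
  exact Nat.lt_of_mul_lt_mul_left this

/-- For every `m > 20` and every involution `t` in the alternating group `A_m`,
the conjugacy class of `t` in `A_m` has size less than `|A_m|^{11/20}`. -/
theorem stmt_6 (m : ℕ) (hm : 20 < m) (t : alternatingGroup (Fin m))
    (ht : orderOf t = 2) :
    (Nat.card {x : alternatingGroup (Fin m) // IsConj t x} : ℝ) <
      (Nat.card (alternatingGroup (Fin m)) : ℝ) ^ ((11 : ℝ) / 20) := by
  have : Nontrivial (Fin m) := Fin.nontrivial_iff_two_le.mpr (by omega)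
  obtain ⟨k, hk⟩ := exists_cycleType_eq_replicate_of_orderOf_eq_two
    (σ := (t : Perm (Fin m))) (by rwa [Subgroup.orderOf_coe])
  have hkm := two_mul_le_card_of_cycleType_eq_replicate hk
  have hclass := card_isConj_mul_eq_of_cycleType_eq_replicate hk
  rw [Fintype.card_fin] at hkm hclass
  have hkey := factorial_pow_nine_mul_lt (k := k + 1) (n := m - 2 * (k + 1)) (by omega) (by omega)
  have hcard : m ! = 2 * Nat.card (alternatingGroup (Fin m)) := by
    rw [two_mul_nat_card_alternatingGroup, Nat.card_perm, Nat.card_fin]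
  rw [show 2 * (k + 1) + (m - 2 * (k + 1)) = m by omega, hcard] at hkey
  have hN := pow_twenty_lt_pow_eleven_of_mul_le
    ((Nat.mul_le_mul_right _ (Subgroup.natCard_isConj_le t)).trans (hclass.trans hcard).le)
    hkey (Nat.card_pos_iff.mpr ⟨⟨⟨t, IsConj.refl t⟩⟩, inferInstance⟩)
  have := lt_rpow_div_of_pow_lt (Nat.cast_nonneg _) (Nat.cast_nonneg _) (q := 20) (p := 11)
    (by norm_num) (by exact_mod_cast hN)
  exact_mod_cast this
end

section
/- Let p be an odd prime, and in AGL_d(p) = V:GL_d(p) let t = (e_1, x_k) where x_k = diag(-I_k, I_{d-k}). Then the centralizer of t in AGL_d(p) has order p^{d-k}·|GL_k(p)|·|GL_{d-k}(p)|. -/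
/-!
Split `V = F_p^k × F_p^(d-k)` into the `-1` and `+1` eigenspaces of `x_k`. An affine map `u ↦ v + A u`
commutes with `t = e₁ + x_k` iff `A` commutes with `x_k` and `v + A e₁ = e₁ + x_k v`. As `2` is
invertible, the first condition says that `A` is block diagonal, i.e. lies in `GL_k(p) × GL_(d-k)(p)`.
Since `e₁` lies in the `-1` eigenspace, so does `e₁ - A e₁`, and the second condition says exactly
that `v - (e₁ - A e₁)/2` is fixed by `x_k`: the first block of `v` is determined and the second is
free, which contributes the factor `p^(d-k)`.
-/

open LinearMap (fst snd inl inr)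

section AffineCentralizer

variable (R : Type*) {V W : Type*} [Ring R] [AddCommGroup V] [Module R V]
  [AddCommGroup W] [Module R W]

def affineCentralizer (t : V → V) : Set (V → V) :=
  {g | (∃ (v : V) (A : V ≃ₗ[R] V), ∀ u, g u = v + A u) ∧ g ∘ t = t ∘ g}

variable {R}

theorem conj_mem_affineCentralizer (e : V ≃ₗ[R] W) {t : V → V} {t' : W → W}
    (he : ∀ u, e (t u) = t' (e u)) {g : V → V} (hg : g ∈ affineCentralizer R t) :
    e ∘ g ∘ e.symm ∈ affineCentralizer R t' := by
  obtain ⟨⟨v, A, hA⟩, hgt⟩ := hg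
  refine ⟨⟨e v, e.symm.trans (A.trans e), fun w => by simp [hA]⟩, funext fun w => ?_⟩
  have ht' : t' w = e (t (e.symm w)) := by rw [he, e.apply_symm_apply]
  change e (g (e.symm (t' w))) = t' (e (g (e.symm w)))
  rw [ht', e.symm_apply_apply, ← he]
  exact congrArg e (congrFun hgt _)

def affineCentralizerCongr (e : V ≃ₗ[R] W) {t : V → V} {t' : W → W}
    (he : ∀ u, e (t u) = t' (e u)) : affineCentralizer R t ≃ affineCentralizer R t' where
  toFun g := ⟨e ∘ g ∘ e.symm, conj_mem_affineCentralizer e he g.2⟩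
  invFun g := ⟨e.symm ∘ g ∘ e, conj_mem_affineCentralizer e.symm
    (fun w => by rw [e.symm_apply_eq, he, e.apply_symm_apply]) g.2⟩
  left_inv g := by ext; simp
  right_inv g := by ext; simp

noncomputable def paramsEquivAffineCentralizer (t : V → V) :
    {p : V × (V ≃ₗ[R] V) // (fun u => p.1 + p.2 u) ∘ t = t ∘ (fun u => p.1 + p.2 u)} ≃
      affineCentralizer R t :=
  Equiv.ofBijective (fun p => ⟨fun u => p.1.1 + p.1.2 u, ⟨p.1.1, p.1.2, fun _ => rfl⟩, p.2⟩) <| by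
    constructor
    · rintro ⟨⟨v, A⟩, _⟩ ⟨⟨v', A'⟩, _⟩ hvA
      have h := congrArg Subtype.val hvA
      have hv : v = v' := by simpa using congrFun h 0
      subst hv
      have hA : A = A' := LinearEquiv.ext fun u => add_left_cancel (congrFun h u)
      subst hA
      rfl
    · rintro ⟨g, ⟨v, A, hg⟩, hgt⟩
      have hg : (fun u => v + A u) = g := funext fun u => (hg u).symm
      exact ⟨⟨(v, A), hg ▸ hgt⟩, Subtype.ext hg⟩

theorem affine_comp_affine_comm_iff {F G : Type*} [FunLike F V V] [AddMonoidHomClass F V V]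
    [FunLike G V V] [AddMonoidHomClass G V V] (v e₀ : V) (A : F) (σ : G) :
    (fun u => v + A u) ∘ (fun u => e₀ + σ u) = (fun u => e₀ + σ u) ∘ (fun u => v + A u) ↔
      (∀ u, A (σ u) = σ (A u)) ∧ v + A e₀ = e₀ + σ v := by
  simp only [funext_iff, Function.comp_apply, map_add]
  constructor
  · intro h
    have h₀ : v + A e₀ = e₀ + σ v := by simpa using h 0
    refine ⟨fun u => ?_, h₀⟩
    have hu := h u
    rw [← add_assoc, ← add_assoc, h₀] at hu
    exact add_left_cancel hu
  · rintro ⟨hA, h₀⟩ u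
    rw [hA, ← add_assoc, ← add_assoc, h₀]

end AffineCentralizer

theorem eq_zero_of_neg_eq_self (R : Type*) {V : Type*} [Ring R] [Invertible (2 : R)]
    [AddCommGroup V] [Module R V] {x : V} (h : -x = x) : x = 0 := by
  rw [← invOf_two_smul_add_invOf_two_smul R x]
  nth_rewrite 2 [← h]
  rw [smul_neg, add_neg_cancel]

theorem LinearEquiv.symm_apply_comm {R V : Type*} [Ring R] [AddCommGroup V] [Module R V]
    {σ : V →ₗ[R] V} {A : V ≃ₗ[R] V} (hA : ∀ u, A (σ u) = σ (A u)) (u : V) :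
    A.symm (σ u) = σ (A.symm u) := by
  rw [A.symm_apply_eq, hA, A.apply_symm_apply]

section FixedPoints

variable {R V : Type*} [Ring R] [Invertible (2 : R)] [AddCommGroup V] [Module R V]
  (σ : V →ₗ[R] V) {e₀ : V}

theorem add_apply_eq_add_iff_isFixedPt (he₀ : σ e₀ = -e₀) {A : V ≃ₗ[R] V}
    (hA : ∀ u, A (σ u) = σ (A u)) (v : V) :
    v + A e₀ = e₀ + σ v ↔ Function.IsFixedPt σ (v - ⅟(2 : R) • (e₀ - A e₀)) := by
  set h := ⅟(2 : R) • (e₀ - A e₀)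
  have hh : h + h = e₀ - A e₀ := invOf_two_smul_add_invOf_two_smul R _
  have hσh : σ h = -h := by
    rw [map_smul, map_sub, ← hA, he₀, map_neg, ← smul_neg, neg_sub', sub_neg_eq_add, neg_add_eq_sub]
  clear_value h
  rw [Function.IsFixedPt, map_sub, hσh]
  constructor
  · intro H
    linear_combination (norm := module) hh - H
  · intro H
    linear_combination (norm := module) hh - H

noncomputable def commutingAffineParamsEquiv (he₀ : σ e₀ = -e₀) :
    {p : V × (V ≃ₗ[R] V) // (∀ u, p.2 (σ u) = σ (p.2 u)) ∧ p.1 + p.2 e₀ = e₀ + σ p.1} ≃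
      {A : V ≃ₗ[R] V // ∀ u, A (σ u) = σ (A u)} × Function.fixedPoints σ where
  toFun p := (⟨p.1.2, p.2.1⟩,
    ⟨p.1.1 - ⅟(2 : R) • (e₀ - p.1.2 e₀), (add_apply_eq_add_iff_isFixedPt σ he₀ p.2.1 _).mp p.2.2⟩)
  invFun q := ⟨(q.2.1 + ⅟(2 : R) • (e₀ - q.1.1 e₀), q.1.1), q.1.2,
    (add_apply_eq_add_iff_isFixedPt σ he₀ q.1.2 _).mpr (by rw [add_sub_cancel_right]; exact q.2.2)⟩
  left_inv p := by ext <;> simp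
  right_inv q := by ext <;> simp

theorem card_affineCentralizer_add_map (he₀ : σ e₀ = -e₀) :
    Nat.card (affineCentralizer R fun u => e₀ + σ u) =
      Nat.card {A : V ≃ₗ[R] V // ∀ u, A (σ u) = σ (A u)} * Nat.card (Function.fixedPoints σ) := by
  rw [← Nat.card_prod, ← Nat.card_congr (paramsEquivAffineCentralizer _)]
  exact Nat.card_congr <| (Equiv.subtypeEquivRight fun p : V × (V ≃ₗ[R] V) =>
    affine_comp_affine_comm_iff p.1 e₀ p.2 σ).trans (commutingAffineParamsEquiv σ he₀)

end FixedPoints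

section NegFst

variable {R V₁ V₂ : Type*} [Ring R] [AddCommGroup V₁] [Module R V₁] [AddCommGroup V₂] [Module R V₂]

variable (R V₁ V₂) in
def negFst : V₁ × V₂ →ₗ[R] V₁ × V₂ := (-LinearMap.id).prodMap LinearMap.id

@[simp]
theorem negFst_apply (u : V₁ × V₂) : negFst R V₁ V₂ u = (-u.1, u.2) := rfl

variable [Invertible (2 : R)] {f g : V₁ × V₂ →ₗ[R] V₁ × V₂}

theorem snd_map_inl_of_comm_negFst (hf : ∀ u, f (negFst R V₁ V₂ u) = negFst R V₁ V₂ (f u))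
    (x : V₁) : (f (x, 0)).2 = 0 := by
  refine eq_zero_of_neg_eq_self R ?_
  have h := congrArg Prod.snd (hf (x, 0))
  rwa [negFst_apply, negFst_apply, ← neg_zero, ← Prod.neg_mk, map_neg, neg_zero] at h

theorem fst_map_inr_of_comm_negFst (hf : ∀ u, f (negFst R V₁ V₂ u) = negFst R V₁ V₂ (f u))
    (y : V₂) : (f (0, y)).1 = 0 := by
  refine eq_zero_of_neg_eq_self R ?_
  have h := congrArg Prod.fst (hf (0, y))
  rw [negFst_apply, negFst_apply, neg_zero] at h
  exact h.symm

theorem eq_prodMap_of_comm_negFst (hf : ∀ u, f (negFst R V₁ V₂ u) = negFst R V₁ V₂ (f u)) :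
    f = (fst R V₁ V₂ ∘ₗ f ∘ₗ inl R V₁ V₂).prodMap (snd R V₁ V₂ ∘ₗ f ∘ₗ inr R V₁ V₂) := by
  ext x <;> simp [snd_map_inl_of_comm_negFst hf, fst_map_inr_of_comm_negFst hf]

theorem fst_comp_inl_comp_of_comm_negFst (hg : ∀ u, g (negFst R V₁ V₂ u) = negFst R V₁ V₂ (g u)) :
    (fst R V₁ V₂ ∘ₗ f ∘ₗ inl R V₁ V₂) ∘ₗ (fst R V₁ V₂ ∘ₗ g ∘ₗ inl R V₁ V₂) =
      fst R V₁ V₂ ∘ₗ (f ∘ₗ g) ∘ₗ inl R V₁ V₂ := by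
  ext x
  have h : ((g (x, 0)).1, (0 : V₂)) = g (x, 0) := Prod.ext rfl (snd_map_inl_of_comm_negFst hg x).symm
  simp [h]

theorem snd_comp_inr_comp_of_comm_negFst (hg : ∀ u, g (negFst R V₁ V₂ u) = negFst R V₁ V₂ (g u)) :
    (snd R V₁ V₂ ∘ₗ f ∘ₗ inr R V₁ V₂) ∘ₗ (snd R V₁ V₂ ∘ₗ g ∘ₗ inr R V₁ V₂) =
      snd R V₁ V₂ ∘ₗ (f ∘ₗ g) ∘ₗ inr R V₁ V₂ := by
  ext x
  have h : ((0 : V₁), (g (0, x)).2) = g (0, x) := Prod.ext (fst_map_inr_of_comm_negFst hg x).symm rfl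
  simp [h]

def linearEquivCommNegFstEquiv :
    {A : (V₁ × V₂) ≃ₗ[R] (V₁ × V₂) // ∀ u, A (negFst R V₁ V₂ u) = negFst R V₁ V₂ (A u)} ≃
      (V₁ ≃ₗ[R] V₁) × (V₂ ≃ₗ[R] V₂) where
  toFun A :=
    have hA := A.2
    have hA' := LinearEquiv.symm_apply_comm A.2
    (.ofLinearMap (fst R V₁ V₂ ∘ₗ A.1 ∘ₗ inl R V₁ V₂) (fst R V₁ V₂ ∘ₗ A.1.symm ∘ₗ inl R V₁ V₂)
        (by rw [fst_comp_inl_comp_of_comm_negFst hA', A.1.comp_symm]; rfl)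
        (by rw [fst_comp_inl_comp_of_comm_negFst hA, A.1.symm_comp]; rfl),
      .ofLinearMap (snd R V₁ V₂ ∘ₗ A.1 ∘ₗ inr R V₁ V₂) (snd R V₁ V₂ ∘ₗ A.1.symm ∘ₗ inr R V₁ V₂)
        (by rw [snd_comp_inr_comp_of_comm_negFst hA', A.1.comp_symm]; rfl)
        (by rw [snd_comp_inr_comp_of_comm_negFst hA, A.1.symm_comp]; rfl))
  invFun BC := ⟨BC.1.prodCongr BC.2, fun u => by simp⟩
  left_inv A := Subtype.ext <| LinearEquiv.toLinearMap_injective <| by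
    exact (eq_prodMap_of_comm_negFst (f := A.1.toLinearMap) A.2).symm
  right_inv BC := by ext <;> simp

def fixedPointsNegFstEquiv : Function.fixedPoints (negFst R V₁ V₂) ≃ V₂ where
  toFun w := w.1.2
  invFun y := ⟨(0, y), by simp [Function.mem_fixedPoints, Function.IsFixedPt]⟩
  left_inv w := Subtype.ext <| Prod.ext (eq_zero_of_neg_eq_self R (congrArg Prod.fst w.2)).symm rfl
  right_inv _ := rfl

end NegFst

section Coordinates

variable (R : Type*) [CommRing R] (k m : ℕ)

def finAddSplit : (Fin (k + m) → R) ≃ₗ[R] (Fin k → R) × (Fin m → R) :=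
  (LinearEquiv.funCongrLeft R R finSumFinEquiv).trans (LinearEquiv.sumArrowLequivProdArrow _ _ R R)

@[simp]
theorem finAddSplit_apply (u : Fin (k + m) → R) :
    finAddSplit R k m u = (fun i => u (Fin.castAdd m i), fun j => u (Fin.natAdd k j)) := rfl

variable {R k m}

theorem finAddSplit_neg_lt (u : Fin (k + m) → R) :
    finAddSplit R k m (fun i => if (i : ℕ) < k then -u i else u i) =
      negFst R _ _ (finAddSplit R k m u) := by
  ext i <;> simp

theorem snd_finAddSplit_eq_zero {u : Fin (k + m) → R} (hu : ∀ i : Fin (k + m), k ≤ i → u i = 0) :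
    (finAddSplit R k m u).2 = 0 := by
  ext j
  exact hu _ (by simp)

end Coordinates

theorem card_linearEquiv_pi (n R : Type*) [Fintype n] [DecidableEq n] [CommRing R] :
    Nat.card ((n → R) ≃ₗ[R] (n → R)) = Nat.card (GL n R) :=
  (Nat.card_congr (Matrix.GeneralLinearGroup.toLin.trans
    (LinearMap.GeneralLinearGroup.generalLinearEquiv R (n → R))).toEquiv).symm

theorem ZMod.isUnit_two {n : ℕ} (hn : Odd n) : IsUnit (2 : ZMod n) := by
  exact_mod_cast (ZMod.isUnit_iff_coprime 2 n).mpr (Nat.coprime_two_left.mpr hn)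

theorem stmt_10_general (p d k : ℕ) (hodd : Odd p) (hk1 : 1 ≤ k) (hkd : k ≤ d) :
    ∀ (xk : (Fin d → ZMod p) → (Fin d → ZMod p))
      (e1 : Fin d → ZMod p) (t : (Fin d → ZMod p) → (Fin d → ZMod p)),
      (∀ u i, xk u i = if (i : ℕ) < k then -u i else u i) →
      (∀ i, e1 i = if (i : ℕ) = 0 then 1 else 0) →
      (∀ u, t u = e1 + xk u) →
      Nat.card {g : (Fin d → ZMod p) → (Fin d → ZMod p) //
          (∃ (v : Fin d → ZMod p) (A : (Fin d → ZMod p) ≃ₗ[ZMod p] (Fin d → ZMod p)),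
            ∀ u, g u = v + A u) ∧ g ∘ t = t ∘ g} =
        p ^ (d - k) * Nat.card (GL (Fin k) (ZMod p)) * Nat.card (GL (Fin (d - k)) (ZMod p)) := by
  intro xk e1 t hxk he1 ht
  obtain ⟨m, rfl⟩ := Nat.exists_eq_add_of_le hkd
  have : Invertible (2 : ZMod p) := (ZMod.isUnit_two hodd).invertible
  set e := finAddSplit (ZMod p) k m
  have he1_split : e e1 = ((e e1).1, 0) :=
    Prod.ext rfl (snd_finAddSplit_eq_zero fun i hi => by rw [he1, if_neg (by omega)])
  let t' (w : (Fin k → ZMod p) × (Fin m → ZMod p)) := ((e e1).1, 0) + negFst (ZMod p) _ _ w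
  have het : ∀ u, e (t u) = t' (e u) := by
    intro u
    rw [ht, map_add, he1_split, funext (hxk u), finAddSplit_neg_lt]
  change Nat.card (affineCentralizer (ZMod p) t) = _
  rw [Nat.card_congr (affineCentralizerCongr e het), card_affineCentralizer_add_map _ (by simp),
    Nat.card_congr linearEquivCommNegFstEquiv, Nat.card_congr fixedPointsNegFstEquiv, Nat.card_prod,
    card_linearEquiv_pi, card_linearEquiv_pi, Nat.card_fun, Nat.card_zmod, Nat.card_fin,
    Nat.add_sub_cancel_left]
  ring

/-- Let `p` be an odd prime and `t = (e₁, x_k) ∈ AGL_d(p)` where `x_k = diag(-I_k, I_{d-k})`,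
i.e. `t : u ↦ e₁ + x_k(u)`. The centralizer of `t` in `AGL_d(p)` (the affine
transformations of `V = (F_p)^d` commuting with `t`) has order
`p^{d-k}·|GL_k(p)|·|GL_{d-k}(p)|`. -/
theorem stmt_10 (p d k : ℕ) (hp : p.Prime) (hodd : Odd p) (hk1 : 1 ≤ k) (hkd : k ≤ d) :
    ∀ (xk : (Fin d → ZMod p) → (Fin d → ZMod p))
      (e1 : Fin d → ZMod p) (t : (Fin d → ZMod p) → (Fin d → ZMod p)),
      (∀ u i, xk u i = if (i : ℕ) < k then -u i else u i) →
      (∀ i, e1 i = if (i : ℕ) = 0 then 1 else 0) →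
      (∀ u, t u = e1 + xk u) →
      Nat.card {g : (Fin d → ZMod p) → (Fin d → ZMod p) //
          (∃ (v : Fin d → ZMod p) (A : (Fin d → ZMod p) ≃ₗ[ZMod p] (Fin d → ZMod p)),
            ∀ u, g u = v + A u) ∧ g ∘ t = t ∘ g} =
        p ^ (d - k) * Nat.card (GL (Fin k) (ZMod p)) * Nat.card (GL (Fin (d - k)) (ZMod p)) :=
  stmt_10_general p d k hodd hk1 hkd
end

section
/- For every prime p ≥ 13 with p ≡ 1 (mod 4), the inequality 2^{(p-1)/2}·((p-1)/2)! > (p-1)·((p-2)!)^{4/9} holds. -/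
/-!
Write `p = 2m + 1`. Raising the claim to the ninth power turns
it into `(2m)^9 ((2m-1)!)^4 < (2^m m!)^9`, i.e. `(2m)^5 ((2m)!)^4 < (2^m m!)^9`. Since
`(2m)! = C(2m, m) (m!)^2 ≤ 4^m (m!)^2 = (2^m m!)^2`, it suffices that `(2m)^5 < 2^m m!`, which holds
for `m ≥ 7` by induction; the remaining case `p = 13` is a direct computation.
-/

open Nat

lemma Nat.factorial_two_mul_le_sq (m : ℕ) : (2 * m)! ≤ (2 ^ m * m !) ^ 2 := by
  have hchoose := choose_mul_factorial_mul_factorial (show m ≤ 2 * m by omega)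
  rw [show 2 * m - m = m by omega, ← centralBinom_eq_two_mul_choose] at hchoose
  calc (2 * m)! = centralBinom m * (m ! * m !) := by rw [← hchoose, mul_assoc]
    _ ≤ 4 ^ m * (m ! * m !) := by gcongr; exact centralBinom_le_four_pow m
    _ = (2 ^ m * m !) ^ 2 := by rw [show 4 = 2 ^ 2 by rfl, ← pow_mul]; ring

lemma Nat.two_mul_pow_five_lt_two_pow_mul_factorial {m : ℕ} (hm : 7 ≤ m) :
    (2 * m) ^ 5 < 2 ^ m * m ! := by
  induction m, hm using Nat.le_induction with
  | base => decide
  | succ n hn ih =>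
    have hsucc : (n + 1) ^ 4 ≤ 2 * n ^ 5 := by
      have hsq : (n + 1) ^ 2 ≤ 2 * n ^ 2 := by nlinarith
      calc (n + 1) ^ 4 = ((n + 1) ^ 2) ^ 2 := by ring
        _ ≤ (2 * n ^ 2) ^ 2 := by gcongr
        _ = 2 * (2 * n ^ 4) := by ring
        _ ≤ 2 * (n * n ^ 4) := by gcongr; omega
        _ = 2 * n ^ 5 := by ring
    calc (2 * (n + 1)) ^ 5 = 32 * (n + 1) * (n + 1) ^ 4 := by ring
      _ ≤ 32 * (n + 1) * (2 * n ^ 5) := by gcongr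
      _ = 2 * (n + 1) * (2 * n) ^ 5 := by ring
      _ < 2 * (n + 1) * (2 ^ n * n !) := by gcongr
      _ = 2 ^ (n + 1) * (n + 1)! := by rw [factorial_succ, pow_succ]; ring

lemma Nat.two_mul_pow_nine_mul_factorial_pow_four_lt {m : ℕ} (hm : 6 ≤ m) :
    (2 * m) ^ 9 * (2 * m - 1)! ^ 4 < (2 ^ m * m !) ^ 9 := by
  obtain rfl | hm7 := hm.eq_or_lt
  · decide
  have hfac : (2 * m)! = 2 * m * (2 * m - 1)! := by
    rw [← mul_factorial_pred (by omega)]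
  calc (2 * m) ^ 9 * (2 * m - 1)! ^ 4 = (2 * m) ^ 5 * (2 * m)! ^ 4 := by rw [hfac]; ring
    _ ≤ (2 * m) ^ 5 * ((2 ^ m * m !) ^ 2) ^ 4 := by gcongr; exact factorial_two_mul_le_sq m
    _ < (2 ^ m * m !) * ((2 ^ m * m !) ^ 2) ^ 4 := by
        gcongr; exact two_mul_pow_five_lt_two_pow_mul_factorial hm7
    _ = (2 ^ m * m !) ^ 9 := by ring

lemma Real.mul_rpow_div_lt_of_pow_lt {a b c : ℝ} {k n : ℕ} (hb : 0 ≤ b) (hc : 0 ≤ c) (hn : n ≠ 0)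
    (h : a ^ n * b ^ k < c ^ n) : a * b ^ ((k : ℝ) / n) < c := by
  refine lt_of_pow_lt_pow_left₀ n hc ?_
  rwa [mul_pow, ← rpow_mul_natCast hb, div_mul_cancel₀ _ (by exact_mod_cast hn), rpow_natCast]

theorem stmt_11_general (p : ℕ) (hp13 : 13 ≤ p) (hp1 : p % 4 = 1) :
    (2 : ℝ) ^ ((p - 1) / 2) * (((p - 1) / 2).factorial : ℝ) >
      ((p : ℝ) - 1) * ((p - 2).factorial : ℝ) ^ ((4 : ℝ) / 9) := by
  obtain ⟨m, rfl⟩ : ∃ m, p = 2 * m + 1 := ⟨p / 2, by omega⟩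
  have hm : 6 ≤ m := by omega
  rw [show (2 * m + 1 - 1) / 2 = m by omega, show 2 * m + 1 - 2 = 2 * m - 1 by omega]
  have key : ((2 * m : ℕ) : ℝ) ^ 9 * ((2 * m - 1)! : ℝ) ^ 4 < ((2 ^ m * m ! : ℕ) : ℝ) ^ 9 := by
    exact_mod_cast two_mul_pow_nine_mul_factorial_pow_four_lt hm
  have hcast : ((2 * m + 1 : ℕ) : ℝ) - 1 = ((2 * m : ℕ) : ℝ) := by push_cast; ring
  rw [gt_iff_lt, hcast, show (4 : ℝ) / 9 = ((4 : ℕ) : ℝ) / (9 : ℕ) by norm_num]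
  exact_mod_cast Real.mul_rpow_div_lt_of_pow_lt (by positivity) (by positivity) (by norm_num) key

/-- For every prime `p ≥ 13` with `p ≡ 1 (mod 4)`,
`2^{(p-1)/2} · ((p-1)/2)! > (p-1) · ((p-2)!)^{4/9}`. -/
theorem stmt_11 (p : ℕ) (hp : p.Prime) (hp13 : 13 ≤ p) (hp1 : p % 4 = 1) :
    (2 : ℝ) ^ ((p - 1) / 2) * (((p - 1) / 2).factorial : ℝ) >
      ((p : ℝ) - 1) * ((p - 2).factorial : ℝ) ^ ((4 : ℝ) / 9) :=
  stmt_11_general p hp13 hp1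
end

section
/- For every prime p ≡ 1 (mod 4), the inequality 2^{(p-1)/2}·((p-1)/2)! ≤ (p-1)·((p-2)!)^{1/2} holds. -/
/-! With `p = 2m + 1`, squaring turns the claim into `4^m (m!)^2 ≤ (2m)^2 (2m-1)! = 2m (2m)!`,
which after dividing by `(m!)^2` is Erdős's bound `4^m ≤ 2m · C(2m, m)` on the central binomial
coefficient. -/

open Nat

theorem Nat.centralBinom_mul_factorial_sq (m : ℕ) : m.centralBinom * m ! ^ 2 = (2 * m)! := by
  have h := choose_mul_factorial_mul_factorial (by omega : m ≤ 2 * m)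
  rwa [show 2 * m - m = m by omega, mul_assoc, ← sq] at h

theorem Nat.four_pow_mul_factorial_sq_le (m : ℕ) (hm : 0 < m) :
    4 ^ m * m ! ^ 2 ≤ (2 * m) ^ 2 * (2 * m - 1)! :=
  calc 4 ^ m * m ! ^ 2 ≤ 2 * m * m.centralBinom * m ! ^ 2 := by
        gcongr; exact four_pow_le_two_mul_self_mul_centralBinom m hm
    _ = 2 * m * (2 * m)! := by rw [mul_assoc, centralBinom_mul_factorial_sq]
    _ = (2 * m) ^ 2 * (2 * m - 1)! := by rw [← mul_factorial_pred (by omega : 2 * m ≠ 0)]; ring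

theorem two_pow_mul_factorial_le_mul_sqrt_factorial (m : ℕ) (hm : 0 < m) :
    (2 : ℝ) ^ m * m ! ≤ 2 * m * √((2 * m - 1)! : ℕ) := by
  rw [← Real.sqrt_sq (by positivity : (0 : ℝ) ≤ 2 * m), ← Real.sqrt_mul (by positivity)]
  apply Real.le_sqrt_of_sq_le
  calc ((2 : ℝ) ^ m * m !) ^ 2 = ((4 ^ m * m ! ^ 2 : ℕ) : ℝ) := by
        push_cast; rw [mul_pow, ← pow_mul, pow_mul']; norm_num
    _ ≤ (((2 * m) ^ 2 * (2 * m - 1)! : ℕ) : ℝ) := by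
        exact_mod_cast Nat.four_pow_mul_factorial_sq_le m hm
    _ = _ := by push_cast; ring

/-- For every prime `p ≡ 1 (mod 4)`,
`2^{(p-1)/2} · ((p-1)/2)! ≤ (p-1) · ((p-2)!)^{1/2}`. -/
theorem stmt_12 (p : ℕ) (hp : p.Prime) (hp1 : p % 4 = 1) :
    (2 : ℝ) ^ ((p - 1) / 2) * (((p - 1) / 2).factorial : ℝ) ≤
      ((p : ℝ) - 1) * ((p - 2).factorial : ℝ) ^ ((1 : ℝ) / 2) := by
  obtain ⟨m, rfl⟩ : ∃ m, p = 2 * m + 1 := ⟨p / 2, by omega⟩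
  have hm : 0 < m := by have := hp.two_le; omega
  rw [show 2 * m + 1 - 1 = 2 * m by omega, show 2 * m + 1 - 2 = 2 * m - 1 by omega,
    Nat.mul_div_cancel_left m two_pos, ← Real.sqrt_eq_rpow]
  push_cast
  simpa using two_pow_mul_factorial_le_mul_sqrt_factorial m hm
end

section
/- Let T = A_m with m > 20, let H_0 ≤ T be a subgroup of even order, and set n = |T : H_0|. Suppose |H_0| ≤ |T|^α and every involution t ∈ H_0 satisfies |t^T| ≤ |T|^β, where 5 - 5α - 9β > 0. Then some involution t ∈ H_0 fixes more than n^{4/9} points in the action of T on cosets of H_0. -/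
/-!
Every coset `gH` is fixed by the conjugate `g t g⁻¹` of an involution `t ∈ H`, and conjugate
elements have equally many fixed points, so `n = |G : H| ≤ |t^G| · fix(t)`. Since
`n ≥ |G|^{1-α}` and `|t^G| ≤ |G|^β < |G|^{5(1-α)/9} ≤ n^{5/9}`, this forces
`fix(t) > n^{4/9}`.
-/

open MulAction

section FixedPoints

variable {G α : Type*} [Group G] [MulAction G α]

theorem card_fixedBy_of_isConj {s t : G} (h : IsConj t s) :
    Nat.card (fixedBy α s) = Nat.card (fixedBy α t) := by
  obtain ⟨c, rfl⟩ := isConj_iff.mp h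
  rw [← smul_fixedBy, Nat.card_coe_set_eq, Nat.card_coe_set_eq, Set.ncard_smul_set]

theorem coe_mem_fixedBy_conj {H : Subgroup G} {t : G} (ht : t ∈ H) (g : G) :
    (g : G ⧸ H) ∈ fixedBy (G ⧸ H) (g * t * g⁻¹) := by
  rw [← smul_fixedBy]
  refine ⟨((1 : G) : G ⧸ H), ?_, by simp⟩
  rwa [mem_fixedBy, ← mem_stabilizer_iff, stabilizer_quotient]

theorem index_le_card_conj_mul_card_fixedBy [Finite G] {H : Subgroup G} {t : G} (ht : t ∈ H) :
    H.index ≤ Nat.card {x : G // IsConj t x} * Nat.card (fixedBy (G ⧸ H) t) := by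
  have := Fintype.ofFinite {x : G // IsConj t x}
  let f : G ⧸ H → Σ s : {x : G // IsConj t x}, fixedBy (G ⧸ H) s.1 := fun x =>
    ⟨⟨x.out * t * x.out⁻¹, isConj_iff.mpr ⟨x.out, rfl⟩⟩,
      ⟨x, by simpa using coe_mem_fixedBy_conj ht x.out⟩⟩
  have hf : Function.Injective f :=
    Function.LeftInverse.injective (g := fun p => p.2.1) fun _ => rfl
  calc H.index = Nat.card (G ⧸ H) := rfl
    _ ≤ Nat.card (Σ s : {x : G // IsConj t x}, fixedBy (G ⧸ H) s.1) :=
      Nat.card_le_card_of_injective f hf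
    _ = ∑ _s : {x : G // IsConj t x}, Nat.card (fixedBy (G ⧸ H) t) := by
      rw [Nat.card_sigma]
      exact Finset.sum_congr rfl fun s _ => card_fixedBy_of_isConj s.2
    _ = _ := by rw [Finset.sum_const, Finset.card_univ, smul_eq_mul, ← Nat.card_eq_fintype_card]

end FixedPoints

theorem Subgroup.exists_mem_orderOf_eq_two {G : Type*} [Group G] [Finite G] (H : Subgroup G)
    (hH : Even (Nat.card H)) : ∃ t ∈ H, orderOf t = 2 := by
  obtain ⟨x, hx⟩ := exists_prime_orderOf_dvd_card' 2 hH.two_dvd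
  exact ⟨x, x.2, by rw [Subgroup.orderOf_coe, hx]⟩

theorem Subgroup.rpow_one_sub_le_index {G : Type*} [Group G] [Finite G] (H : Subgroup G) {α : ℝ}
    (hα : (Nat.card H : ℝ) ≤ (Nat.card G : ℝ) ^ α) :
    (Nat.card G : ℝ) ^ (1 - α) ≤ H.index := by
  have hG : (0 : ℝ) < Nat.card G := by exact_mod_cast Nat.card_pos
  rw [Real.rpow_sub hG, Real.rpow_one, div_le_iff₀ (by positivity)]
  calc (Nat.card G : ℝ) = H.index * Nat.card H := by exact_mod_cast H.index_mul_card.symm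
    _ ≤ H.index * (Nat.card G : ℝ) ^ α := by gcongr

theorem Real.rpow_lt_rpow_five_ninths {N n α β : ℝ} (hN : 1 < N) (hn : N ^ (1 - α) ≤ n)
    (hαβ : 5 - 5 * α - 9 * β > 0) : N ^ β < n ^ ((5 : ℝ) / 9) :=
  calc N ^ β < N ^ ((1 - α) * (5 / 9)) := Real.rpow_lt_rpow_of_exponent_lt hN (by linarith)
    _ = (N ^ (1 - α)) ^ ((5 : ℝ) / 9) := Real.rpow_mul (by positivity) _ _
    _ ≤ n ^ ((5 : ℝ) / 9) := by gcongr

theorem Real.rpow_four_ninths_lt_of_le_mul {n c f : ℝ} (hn : 0 < n) (hc : 0 < c)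
    (hcn : c < n ^ ((5 : ℝ) / 9)) (hnf : n ≤ f * c) : n ^ ((4 : ℝ) / 9) < f := by
  refine lt_of_mul_lt_mul_right ?_ hc.le
  calc n ^ ((4 : ℝ) / 9) * c < n ^ ((4 : ℝ) / 9) * n ^ ((5 : ℝ) / 9) := by gcongr
    _ = n := by rw [← Real.rpow_add hn]; norm_num
    _ ≤ f * c := hnf

theorem stmt_14_general (m : ℕ)
    (H0 : Subgroup (alternatingGroup (Fin m))) (hEven : Even (Nat.card H0))
    (α β : ℝ)
    (hα : (Nat.card H0 : ℝ) ≤ (Nat.card (alternatingGroup (Fin m)) : ℝ) ^ α)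
    (hβ : ∀ t : alternatingGroup (Fin m), t ∈ H0 → orderOf t = 2 →
      (Nat.card {x : alternatingGroup (Fin m) // IsConj t x} : ℝ) ≤
        (Nat.card (alternatingGroup (Fin m)) : ℝ) ^ β)
    (hαβ : 5 - 5 * α - 9 * β > 0) :
    ∃ t : alternatingGroup (Fin m), t ∈ H0 ∧ orderOf t = 2 ∧
      (Nat.card {x : alternatingGroup (Fin m) ⧸ H0 // t • x = x} : ℝ) >
        (H0.index : ℝ) ^ ((4 : ℝ) / 9) := by
  obtain ⟨t, ht, hto⟩ := H0.exists_mem_orderOf_eq_two hEven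
  refine ⟨t, ht, hto, ?_⟩
  have hN : (1 : ℝ) < Nat.card (alternatingGroup (Fin m)) := by
    have h2 := orderOf_le_card (x := t)
    rw [hto] at h2
    exact_mod_cast one_lt_two.trans_le h2
  have hn : (0 : ℝ) < H0.index := by
    exact_mod_cast Nat.pos_of_ne_zero H0.index_ne_zero_of_finite
  have : Nonempty {x : alternatingGroup (Fin m) // IsConj t x} := ⟨⟨t, .refl t⟩⟩
  have hc : (0 : ℝ) < Nat.card {x : alternatingGroup (Fin m) // IsConj t x} := by
    exact_mod_cast Nat.card_pos
  have hcn := (hβ t ht hto).trans_lt <|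
    Real.rpow_lt_rpow_five_ninths hN (H0.rpow_one_sub_le_index hα) hαβ
  have hcount : (H0.index : ℝ) ≤ Nat.card (fixedBy (alternatingGroup (Fin m) ⧸ H0) t) *
      Nat.card {x : alternatingGroup (Fin m) // IsConj t x} := by
    rw [mul_comm]
    exact_mod_cast index_le_card_conj_mul_card_fixedBy ht
  exact Real.rpow_four_ninths_lt_of_le_mul hn hc hcn hcount

/-- Let `T = A_m` with `m > 20`, `H₀ ≤ T` of even order, `n = |T : H₀|`. If
`|H₀| ≤ |T|^α`, every involution `t ∈ H₀` has `|t^T| ≤ |T|^β`, and `5 - 5α - 9β > 0`,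
then some involution in `H₀` fixes more than `n^{4/9}` cosets of `H₀` in `T`. -/
theorem stmt_14 (m : ℕ) (hm : 20 < m)
    (H0 : Subgroup (alternatingGroup (Fin m))) (hEven : Even (Nat.card H0))
    (α β : ℝ)
    (hα : (Nat.card H0 : ℝ) ≤ (Nat.card (alternatingGroup (Fin m)) : ℝ) ^ α)
    (hβ : ∀ t : alternatingGroup (Fin m), t ∈ H0 → orderOf t = 2 →
      (Nat.card {x : alternatingGroup (Fin m) // IsConj t x} : ℝ) ≤
        (Nat.card (alternatingGroup (Fin m)) : ℝ) ^ β)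
    (hαβ : 5 - 5 * α - 9 * β > 0) :
    ∃ t : alternatingGroup (Fin m), t ∈ H0 ∧ orderOf t = 2 ∧
      (Nat.card {x : alternatingGroup (Fin m) ⧸ H0 // t • x = x} : ℝ) >
        (H0.index : ℝ) ^ ((4 : ℝ) / 9) :=
  stmt_14_general m H0 hEven α β hα hβ hαβ
end
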